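/- arXiv:1511.07050 — 2 statements merged into one kernel-verified Lean document; each statement's English description precedes it below -/
import Mathlib

section
/- Let m = 2 and 0 < α_1 < α_2 < 1 with α_1 + α_2 < 1. There exists a joint distribution of (p_1, p_2) with both marginals uniform on [0,1] such that the step-up test with critical values α_1, α_2 (both hypotheses true) satisfies FDR = α_1 + α_2. The construction: p_1 is uniform on [0,1], and given p_1 = x, p_2 is uniform on (1−α_1, 1] if x ≤ α_1, uniform on (α_1, α_2] if α_1 < x ≤ α_2, and uniform on (0, α_1] ∪ (α_2, 1−α_1] if x > α_2. -/
open MeasureTheory ProbabilityTheory Finset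
open scoped Classical
noncomputable section

/-- `#{i : p i ≤ t}`, i.e. `m·F̂_m(t)`. -/
def countLE {m : ℕ} (p : Fin m → ℝ) (t : ℝ) : ℕ :=
  (Finset.univ.filter (fun i => p i ≤ t)).card

/-- The `i`-th order statistic `p_{i:m}` (for `1 ≤ i ≤ m`), characterized by
`p_{i:m} ≤ t ↔ i ≤ #{k : p k ≤ t}`. -/
def orderStat {m : ℕ} (p : Fin m → ℝ) (i : ℕ) : ℝ :=
  sInf {t | i ≤ countLE p t}

/-- Step-up rejection number `R = max {j : p_{j:m} ≤ α_j}` (`max ∅ = 0`). -/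
def suR {m : ℕ} (α : ℕ → ℝ) (p : Fin m → ℝ) : ℕ :=
  WithBot.unbotD 0 (((Finset.range (m+1)).filter (fun j => 1 ≤ j ∧ orderStat p j ≤ α j)).max)

/-- Step-down rejection number `R = max {j : p_{i:m} ≤ α_i for all i ≤ j}`. -/
def sdR {m : ℕ} (α : ℕ → ℝ) (p : Fin m → ℝ) : ℕ :=
  WithBot.unbotD 0 (((Finset.range (m+1)).filter
    (fun j => ∀ i ∈ Finset.Icc 1 j, orderStat p i ≤ α i)).max)

/-- FDR `= E[V / max(R,1)]` for rejection number `R` and rejection rule `rej`. -/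
def FDR {Ω : Type*} [MeasurableSpace Ω] (μ : Measure Ω) {m : ℕ}
    (p : Ω → Fin m → ℝ) (I0 : Finset (Fin m))
    (R : (Fin m → ℝ) → ℕ) (rej : (Fin m → ℝ) → Fin m → Prop) : ℝ :=
  ∫ ω, ((I0.filter (fun i => rej (p ω) i)).card : ℝ) / (max (R (p ω)) 1 : ℕ) ∂μ

/-- FDR of the step-up test with critical values `α`. -/
def suFDR {Ω : Type*} [MeasurableSpace Ω] (μ : Measure Ω) {m : ℕ}
    (α : ℕ → ℝ) (p : Ω → Fin m → ℝ) (I0 : Finset (Fin m)) : ℝ :=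
  FDR μ p I0 (suR α) (fun q i => q i ≤ α (suR α q))

/-- FDR of the step-down test with critical values `α`
(rejecting the hypotheses belonging to `p_{i:m}`, `i ≤ R`). -/
def sdFDR {Ω : Type*} [MeasurableSpace Ω] (μ : Measure Ω) {m : ℕ}
    (α : ℕ → ℝ) (p : Ω → Fin m → ℝ) (I0 : Finset (Fin m)) : ℝ :=
  FDR μ p I0 (sdR α) (fun q i => 1 ≤ sdR α q ∧ q i ≤ orderStat q (sdR α q))

/-- Benjamini–Hochberg critical values `b_j = jα/m`. -/
def bh (m : ℕ) (α : ℝ) (j : ℕ) : ℝ := j * α / m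

/-- The uniform distribution on `[0,1]`. -/
def unif01 : Measure ℝ := volume.restrict (Set.Icc 0 1)

/-! Take `p₁` uniform and `p₂ = f p₁` for an interval exchange `f` of `(0, 1]`, so that `p₂` is
uniform as well. With both hypotheses true and increasing critical values, the step-up test
rejects exactly `R` hypotheses, so its false discovery proportion is the indicator of `R ≠ 0`,
i.e. of `{p₁ ≤ α₁} ∪ {p₂ ≤ α₁} ∪ {p₁, p₂ ≤ α₂}`. The exchange `f` makes the pieces
`p₁ ∈ (0, α₁]`, `p₁ = p₂ ∈ (α₁, α₂]`, `p₂ ∈ (0, α₁]` of this event disjoint, with union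
`{p₁ ≤ α₁ + α₂}`. -/

lemma countLE_fin_two (q : Fin 2 → ℝ) (t : ℝ) :
    countLE q t = if max (q 0) (q 1) ≤ t then 2 else if min (q 0) (q 1) ≤ t then 1 else 0 := by
  rw [countLE, Finset.card_filter, Fin.sum_univ_two]
  by_cases h0 : q 0 ≤ t <;> by_cases h1 : q 1 ≤ t <;> simp [h0, h1]

lemma orderStat_one_fin_two (q : Fin 2 → ℝ) : orderStat q 1 = min (q 0) (q 1) := by
  have h : {t | 1 ≤ countLE q t} = Set.Ici (min (q 0) (q 1)) := by
    ext t
    simp only [Set.mem_ofPred_eq, countLE_fin_two, Set.mem_Ici]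
    split_ifs <;> simp_all
  rw [orderStat, h, csInf_Ici]

lemma orderStat_two_fin_two (q : Fin 2 → ℝ) : orderStat q 2 = max (q 0) (q 1) := by
  have h : {t | 2 ≤ countLE q t} = Set.Ici (max (q 0) (q 1)) := by
    ext t
    simp only [Set.mem_ofPred_eq, countLE_fin_two, Set.mem_Ici]
    split_ifs <;> simp_all
  rw [orderStat, h, csInf_Ici]

lemma suR_fin_two (α : ℕ → ℝ) (q : Fin 2 → ℝ) :
    suR α q = if max (q 0) (q 1) ≤ α 2 then 2 else if min (q 0) (q 1) ≤ α 1 then 1 else 0 := by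
  simp only [suR, show Finset.range 3 = {0, 1, 2} by rfl, Finset.filter_insert,
    Finset.filter_singleton, orderStat_one_fin_two, orderStat_two_fin_two]
  split_ifs <;> simp_all

lemma suR_fin_two_ne_zero_iff (α : ℕ → ℝ) (q : Fin 2 → ℝ) :
    suR α q ≠ 0 ↔ max (q 0) (q 1) ≤ α 2 ∨ min (q 0) (q 1) ≤ α 1 := by
  rw [suR_fin_two]
  split_ifs <;> simp_all

lemma countLE_suR_fin_two {α : ℕ → ℝ} (h01 : α 0 ≤ α 1) (h12 : α 1 ≤ α 2) (q : Fin 2 → ℝ) :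
    countLE q (α (suR α q)) = suR α q := by
  rw [suR_fin_two]
  split_ifs <;> rw [countLE_fin_two] <;> split_ifs <;> grind

lemma suFDR_univ_fin_two_eq_integral_indicator {Ω : Type*} [MeasurableSpace Ω] (μ : Measure Ω)
    {α : ℕ → ℝ} (h01 : α 0 ≤ α 1) (h12 : α 1 ≤ α 2) (p : Ω → Fin 2 → ℝ) :
    suFDR μ α p univ = ∫ ω, {q | suR α q ≠ 0}.indicator 1 (p ω) ∂μ := by
  refine integral_congr_ae (Filter.Eventually.of_forall fun ω => ?_)
  change (countLE (p ω) (α (suR α (p ω))) : ℝ) / _ = _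
  rw [countLE_suR_fin_two h01 h12]
  rcases Nat.eq_zero_or_pos (suR α (p ω)) with h | h
  · simp [h]
  · simp [h.ne', Nat.one_le_iff_ne_zero.mpr h.ne']

instance : IsProbabilityMeasure unif01 := ⟨by simp [unif01]⟩

lemma unif01_real_Iic {t : ℝ} (ht0 : 0 ≤ t) (ht1 : t ≤ 1) : unif01.real (Set.Iic t) = t := by
  have h : Set.Iic t ∩ Set.Icc 0 1 = Set.Icc 0 t := by
    ext x
    simp only [Set.mem_inter_iff, Set.mem_Iic, Set.mem_Icc]
    constructor <;> intro <;> constructor <;> grind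
  rw [unif01, measureReal_restrict_apply measurableSet_Iic, h, Real.volume_real_Icc_of_le ht0,
    sub_zero]

lemma restrict_Ioc_eq_add {μ : Measure ℝ} {a b c : ℝ} (hab : a ≤ b) (hbc : b ≤ c) :
    μ.restrict (Set.Ioc a c) = μ.restrict (Set.Ioc a b) + μ.restrict (Set.Ioc b c) := by
  rw [← Set.Ioc_union_Ioc_eq_Ioc hab hbc,
    Measure.restrict_union (Set.Ioc_disjoint_Ioc_of_le le_rfl) measurableSet_Ioc]

lemma restrict_Ioc_eq_add_add_add {μ : Measure ℝ} {a s t u b : ℝ} (has : a ≤ s) (hst : s ≤ t)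
    (htu : t ≤ u) (hub : u ≤ b) :
    μ.restrict (Set.Ioc a b) = μ.restrict (Set.Ioc a s) + μ.restrict (Set.Ioc s t) +
      μ.restrict (Set.Ioc t u) + μ.restrict (Set.Ioc u b) := by
  rw [restrict_Ioc_eq_add (has.trans (hst.trans htu)) hub,
    restrict_Ioc_eq_add (has.trans hst) htu, restrict_Ioc_eq_add has hst]

lemma map_volume_restrict_Ioc_of_eqOn_add_const {f : ℝ → ℝ} {a b c a' b' : ℝ}
    (ha : a + c = a') (hb : b + c = b') (hf : ∀ x ∈ Set.Ioc a b, f x = x + c) :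
    (volume.restrict (Set.Ioc a b)).map f = volume.restrict (Set.Ioc a' b') := by
  subst ha hb
  rw [Measure.map_congr (ae_restrict_of_forall_mem measurableSet_Ioc hf),
    ← Set.image_add_const_Ioc]
  exact ((measurePreserving_add_right volume c).restrict_image_emb
    (measurableEmbedding_addRight c) _).map_eq

/-- Translates the blocks `(0, a₁], (a₁, a₂], (a₂, a₂ + a₁], (a₂ + a₁, 1]` onto
`(1 - a₁, 1], (a₁, a₂], (0, a₁], (a₂, 1 - a₁]`, so that `p₂ = intervalExchange a₁ a₂ p₁` has the
paper's conditional laws given `p₁`. -/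
def intervalExchange (a1 a2 x : ℝ) : ℝ :=
  if x ≤ a1 then x + (1 - a1) else if x ≤ a2 then x else if x ≤ a2 + a1 then x - a2 else x - a1

lemma measurable_intervalExchange (a1 a2 : ℝ) : Measurable (intervalExchange a1 a2) := by
  refine .ite measurableSet_Iic (by fun_prop) (.ite measurableSet_Iic (by fun_prop)
    (.ite measurableSet_Iic (by fun_prop) (by fun_prop)))

lemma map_intervalExchange_unif01 {a1 a2 : ℝ} (ha1 : 0 ≤ a1) (h12 : a1 ≤ a2)
    (hsum : a1 + a2 ≤ 1) : unif01.map (intervalExchange a1 a2) = unif01 := by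
  have hunif : unif01 = volume.restrict (Set.Ioc 0 1) :=
    (Measure.restrict_congr_set Ioc_ae_eq_Icc).symm
  have hf := measurable_intervalExchange a1 a2
  calc unif01.map (intervalExchange a1 a2)
      = (volume.restrict (Set.Ioc 0 a1) + volume.restrict (Set.Ioc a1 a2) +
          volume.restrict (Set.Ioc a2 (a2 + a1)) +
          volume.restrict (Set.Ioc (a2 + a1) 1)).map (intervalExchange a1 a2) := by
        rw [hunif,
          restrict_Ioc_eq_add_add_add (u := a2 + a1) ha1 h12 (by linarith) (by linarith)]
    _ = volume.restrict (Set.Ioc (1 - a1) 1) + volume.restrict (Set.Ioc a1 a2) +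
          volume.restrict (Set.Ioc 0 a1) + volume.restrict (Set.Ioc a2 (1 - a1)) := by
        rw [Measure.map_add _ _ hf, Measure.map_add _ _ hf, Measure.map_add _ _ hf,
          map_volume_restrict_Ioc_of_eqOn_add_const (c := 1 - a1) (a' := 1 - a1) (b' := 1)
            (by ring) (by ring) ?_,
          map_volume_restrict_Ioc_of_eqOn_add_const (c := 0) (a' := a1) (b' := a2)
            (by ring) (by ring) ?_,
          map_volume_restrict_Ioc_of_eqOn_add_const (c := -a2) (a' := 0) (b' := a1)
            (by ring) (by ring) ?_,
          map_volume_restrict_Ioc_of_eqOn_add_const (c := -a1) (a' := a2) (b' := 1 - a1)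
            (by ring) (by ring) ?_]
        all_goals
          intro x hx
          unfold intervalExchange
          split_ifs <;> linarith [hx.1, hx.2]
    _ = unif01 := by
        rw [hunif, restrict_Ioc_eq_add_add_add (a := 0) (b := 1) (u := 1 - a1) ha1 h12
          (by linarith) (by linarith)]
        abel

lemma max_le_or_min_le_intervalExchange_iff {a1 a2 : ℝ} (ha1 : 0 ≤ a1) (h12 : a1 ≤ a2)
    (x : ℝ) :
    max x (intervalExchange a1 a2 x) ≤ a2 ∨ min x (intervalExchange a1 a2 x) ≤ a1 ↔
      x ≤ a1 + a2 := by
  unfold intervalExchange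
  split_ifs <;> grind

theorem su_two_dependent_bound_sharp_general
    (a1 a2 : ℝ) (ha1 : 0 < a1) (h12 : a1 < a2) (hsum : a1 + a2 < 1) :
    ∃ (Ω : Type) (_ : MeasurableSpace Ω) (μ : Measure Ω) (_ : IsProbabilityMeasure μ)
      (p : Ω → Fin 2 → ℝ),
      (∀ i, Measurable (fun ω => p ω i)) ∧
      -- uniform [0,1] marginals
      (∀ i : Fin 2, Measure.map (fun ω => p ω i) μ = unif01) ∧
      suFDR μ (fun j => if j = 0 then 0 else if j = 1 then a1 else a2) p Finset.univ
        = a1 + a2 := by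
  set α : ℕ → ℝ := fun j => if j = 0 then 0 else if j = 1 then a1 else a2
  refine ⟨ℝ, inferInstance, unif01, inferInstance, fun x => ![x, intervalExchange a1 a2 x],
    Fin.forall_fin_two.2 ⟨measurable_id, measurable_intervalExchange a1 a2⟩,
    Fin.forall_fin_two.2 ⟨Measure.map_id, map_intervalExchange_unif01 ha1.le h12.le hsum.le⟩, ?_⟩
  have hrejects (x : ℝ) :
      {q | suR α q ≠ 0}.indicator (1 : (Fin 2 → ℝ) → ℝ) ![x, intervalExchange a1 a2 x] =
      (Set.Iic (a1 + a2)).indicator 1 x := by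
    simp only [Set.indicator, Set.mem_ofPred_eq, suR_fin_two_ne_zero_iff, Set.mem_Iic,
      ← max_le_or_min_le_intervalExchange_iff ha1.le h12.le x]
    simp [α]
  rw [suFDR_univ_fin_two_eq_integral_indicator _ (by simpa [α] using ha1.le)
    (by simpa [α] using h12.le)]
  simp_rw [hrejects]
  rw [integral_indicator_one measurableSet_Iic, unif01_real_Iic (by linarith) hsum.le]

/-- Sharpness of the two-dimensional step-up bound: if
`0 < α₁ < α₂ < 1` and `α₁ + α₂ < 1`, there is a joint distribution of
`(p₁, p₂)` with uniform `[0,1]` marginals (both nulls true) for which the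
step-up test with critical values `α₁, α₂` has `FDR = α₁ + α₂`. -/
theorem su_two_dependent_bound_sharp
    (a1 a2 : ℝ) (ha1 : 0 < a1) (h12 : a1 < a2) (ha2 : a2 < 1) (hsum : a1 + a2 < 1) :
    ∃ (Ω : Type) (_ : MeasurableSpace Ω) (μ : Measure Ω) (_ : IsProbabilityMeasure μ)
      (p : Ω → Fin 2 → ℝ),
      (∀ i, Measurable (fun ω => p ω i)) ∧
      -- uniform [0,1] marginals
      (∀ i : Fin 2, Measure.map (fun ω => p ω i) μ = unif01) ∧
      suFDR μ (fun j => if j = 0 then 0 else if j = 1 then a1 else a2) p Finset.univ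
        = a1 + a2 :=
  su_two_dependent_bound_sharp_general a1 a2 ha1 h12 hsum
end
end

section
/- Consider the step-down test with Benjamini–Hochberg critical values b_i = iα/m (or the modified data-dependent values a_i = b_{m·F̂_m(p_{i:m})}). Under the basic independence assumptions, FDR ≤ (m_0/m)·α. -/
/-!
Write the FDR as `∑_{i ∈ I₀} E[1{i rejected} / max(R, 1)]`. Both tests are self-consistent
(a rejected p-value is at most `b_R = Rα/m`), and raising a true-null p-value `p_i` that lies
below `b_R`, the other p-values fixed, cannot increase `R`. So, the other p-values fixed, every
value of `p_i` for which `i` is rejected lies below `kα/m`, with `k` the least number of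
rejections over these values, and there `1/R ≤ 1/k`. As `p_i` is independent of the other
p-values and stochastically larger than uniform, each summand is at most `(kα/m)/k = α/m`.
-/
open MeasureTheory ProbabilityTheory Finset
open scoped Classical
noncomputable section

/-- Step-down rejection number with the data-dependent critical values
`a_i = b_{m·F̂_m(p_{i:m})}`. -/
def sdRdata {m : ℕ} (b : ℕ → ℝ) (p : Fin m → ℝ) : ℕ :=
  WithBot.unbotD 0 (((Finset.range (m+1)).filter
    (fun j => ∀ i ∈ Finset.Icc 1 j,
      orderStat p i ≤ b (countLE p (orderStat p i)))).max)

/-- FDR of the step-down test with data-dependent critical values. -/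
def sdFDRdata {Ω : Type*} [MeasurableSpace Ω] (μ : Measure Ω) {m : ℕ}
    (b : ℕ → ℝ) (p : Ω → Fin m → ℝ) (I0 : Finset (Fin m)) : ℝ :=
  FDR μ p I0 (sdRdata b) (fun q i => 1 ≤ sdRdata b q ∧ q i ≤ orderStat q (sdRdata b q))

section OrderStatistics

variable {m : ℕ} {q q' : Fin m → ℝ} {i j : ℕ}

theorem countLE_mono (q : Fin m → ℝ) : Monotone (countLE q) := fun _ _ hst =>
  card_le_card (monotone_filter_right _ fun _ _ hk => hk.trans hst)

theorem countLE_le (q : Fin m → ℝ) (t : ℝ) : countLE q t ≤ m :=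
  (card_filter_le _ _).trans_eq (card_fin m)

theorem countLE_anti_of_le (h : q ≤ q') (t : ℝ) : countLE q' t ≤ countLE q t :=
  card_le_card (monotone_filter_right _ fun k _ hk => (h k).trans hk)

theorem exists_isLeast_countLE (h1 : 1 ≤ i) (h2 : i ≤ m) :
    ∃ k, IsLeast {t | i ≤ countLE q t} (q k) := by
  set A := univ.filter fun k => i ≤ countLE q (q k)
  have hA : A.Nonempty := by
    obtain ⟨k, -, hk⟩ := univ.exists_max_image q (univ_nonempty_iff.2 ⟨⟨0, by omega⟩⟩)
    refine ⟨k, mem_filter.2 ⟨mem_univ _, ?_⟩⟩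
    rwa [countLE, filter_true_of_mem fun l _ => hk l (mem_univ l), card_univ, Fintype.card_fin]
  obtain ⟨k, hkA, hk⟩ := A.exists_min_image q hA
  refine ⟨k, (mem_filter.1 hkA).2, fun t ht => ?_⟩
  -- the largest value `q l ≤ t` has the same count as `t`
  obtain ⟨l, hl, hlmax⟩ := (univ.filter (q · ≤ t)).exists_max_image q
    (card_pos.1 (h1.trans ht))
  have hlt : q l ≤ t := (mem_filter.1 hl).2
  have hcount : countLE q (q l) = countLE q t := congrArg card <| filter_congr fun k _ =>
    ⟨fun h => h.trans hlt, fun h => hlmax k (mem_filter.2 ⟨mem_univ _, h⟩)⟩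
  exact (hk l (mem_filter.2 ⟨mem_univ _, hcount ▸ ht⟩)).trans hlt

theorem isLeast_orderStat (h1 : 1 ≤ i) (h2 : i ≤ m) :
    IsLeast {t | i ≤ countLE q t} (orderStat q i) := by
  obtain ⟨k, hk⟩ := exists_isLeast_countLE (q := q) h1 h2
  rwa [orderStat, hk.csInf_eq]

theorem exists_eq_orderStat (h1 : 1 ≤ i) (h2 : i ≤ m) : ∃ k, q k = orderStat q i := by
  obtain ⟨k, hk⟩ := exists_isLeast_countLE (q := q) h1 h2
  exact ⟨k, hk.csInf_eq.symm⟩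

theorem orderStat_le_iff (h1 : 1 ≤ i) (h2 : i ≤ m) {t : ℝ} :
    orderStat q i ≤ t ↔ i ≤ countLE q t :=
  ⟨fun h => (isLeast_orderStat h1 h2).1.trans (countLE_mono q h),
    fun h => (isLeast_orderStat h1 h2).2 h⟩

theorem orderStat_mono (h1 : 1 ≤ i) (hij : i ≤ j) (hj : j ≤ m) :
    orderStat q i ≤ orderStat q j :=
  (orderStat_le_iff h1 (hij.trans hj)).2 (hij.trans (isLeast_orderStat (h1.trans hij) hj).1)

theorem orderStat_le_orderStat_of_le (h : q ≤ q') (h1 : 1 ≤ i) (h2 : i ≤ m) :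
    orderStat q i ≤ orderStat q' i :=
  (orderStat_le_iff h1 h2).2 ((isLeast_orderStat h1 h2).1.trans (countLE_anti_of_le h _))

theorem card_lt_orderStat_lt (h1 : 1 ≤ i) (h2 : i ≤ m) :
    #{l | q l < orderStat q i} < i := by
  by_contra! hi
  obtain ⟨l, hl, hlmax⟩ := (univ.filter (q · < orderStat q i)).exists_max_image q
    (card_pos.1 (h1.trans hi))
  refine (mem_filter.1 hl).2.not_ge ((orderStat_le_iff h1 h2).2 (hi.trans ?_))
  exact card_le_card (monotone_filter_right _ fun k hk hkl =>
    hlmax k (mem_filter.2 ⟨hk, hkl⟩))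

theorem orderStat_card_lt_add_one (k : Fin m) : orderStat q (#{l | q l < q k} + 1) = q k := by
  set n := #{l | q l < q k}
  have hsub : insert k (univ.filter fun l => q l < q k) ⊆ univ.filter fun l => q l ≤ q k := by
    intro l hl
    rcases mem_insert.1 hl with rfl | hl
    · simp
    · simpa using (mem_filter.1 hl).2.le
  have hcount : n + 1 ≤ countLE q (q k) := by
    simpa [n, countLE, card_insert_of_notMem] using card_le_card hsub
  have h2 := hcount.trans (countLE_le q _)
  refine le_antisymm ((orderStat_le_iff (by omega) h2).2 hcount) (not_lt.1 fun hlt => ?_)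
  have hge : n + 1 ≤ countLE q (orderStat q (n + 1)) := (isLeast_orderStat (by omega) h2).1
  have hle : countLE q (orderStat q (n + 1)) ≤ n :=
    card_le_card (monotone_filter_right _ fun l _ hl => hl.trans_lt hlt)
  omega

end OrderStatistics

section Measurability

variable {m : ℕ}

theorem measurable_countLE {f : (Fin m → ℝ) → ℝ} (hf : Measurable f) :
    Measurable fun q => countLE q (f q) := by
  simp only [countLE, card_filter]
  exact Finset.measurable_sum _ fun k _ =>
    Measurable.ite (measurableSet_le (measurable_pi_apply k) hf) measurable_const measurable_const

theorem measurable_orderStat (i : ℕ) : Measurable fun q : Fin m → ℝ => orderStat q i := by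
  rcases Nat.eq_zero_or_pos i with rfl | h1
  · simp [orderStat]
  by_cases h2 : i ≤ m
  · refine measurable_of_Iic fun t => ?_
    simp only [Set.preimage, Set.mem_Iic, orderStat_le_iff h1 h2]
    exact measurable_countLE measurable_const measurableSet_Ici
  · have hempty (q : Fin m → ℝ) : {t | i ≤ countLE q t} = ∅ :=
      Set.eq_empty_of_forall_notMem fun t ht => h2 (le_trans ht (countLE_le q t))
    simp [orderStat, hempty]

end Measurability

-- `sdR b q` and `sdRdata b q` are, by definition, `stepDownIndex m` of their acceptance conditions.
def stepDownIndex (m : ℕ) (C : ℕ → Prop) : ℕ :=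
  WithBot.unbotD 0 (((Finset.range (m+1)).filter (fun j => ∀ i ∈ Finset.Icc 1 j, C i)).max)

section StepDown

variable {m r : ℕ} {C : ℕ → Prop}

theorem le_stepDownIndex_iff : r ≤ stepDownIndex m C ↔ r ≤ m ∧ ∀ i ∈ Icc 1 r, C i := by
  unfold stepDownIndex
  have hne : ((range (m + 1)).filter fun j => ∀ i ∈ Icc 1 j, C i).Nonempty :=
    ⟨0, by simp only [mem_filter, mem_range, mem_Icc]; exact ⟨by omega, by omega⟩⟩
  rw [← coe_max' hne, WithBot.unbotD_coe]
  constructor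
  · intro h
    have hmax := max'_mem _ hne
    generalize max' _ hne = M at h hmax
    simp only [mem_filter, mem_range, mem_Icc] at hmax
    exact ⟨by omega, fun i hi => hmax.2 i ⟨(mem_Icc.1 hi).1, (mem_Icc.1 hi).2.trans h⟩⟩
  · rintro ⟨hr, hC⟩
    exact le_max' _ r (by simp only [mem_filter, mem_range]; exact ⟨by omega, hC⟩)

theorem stepDownIndex_le : stepDownIndex m C ≤ m := (le_stepDownIndex_iff.1 le_rfl).1

theorem stepDownIndex_spec {i : ℕ} (h1 : 1 ≤ i) (h2 : i ≤ stepDownIndex m C) : C i :=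
  (le_stepDownIndex_iff.1 le_rfl).2 i (mem_Icc.2 ⟨h1, h2⟩)

theorem not_stepDownIndex_add_one (h : stepDownIndex m C < m) : ¬ C (stepDownIndex m C + 1) := by
  intro hC
  have : stepDownIndex m C + 1 ≤ stepDownIndex m C := by
    refine le_stepDownIndex_iff.2 ⟨h, fun i hi => ?_⟩
    obtain ⟨h1, h2⟩ := mem_Icc.1 hi
    rcases Nat.le_succ_iff.1 h2 with h2 | rfl
    · exact stepDownIndex_spec h1 h2
    · exact hC
  omega

theorem measurable_stepDownIndex {X : Type*} [MeasurableSpace X] {C : X → ℕ → Prop}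
    (hC : ∀ i, MeasurableSet {x | C x i}) : Measurable fun x => stepDownIndex m (C x) := by
  refine measurable_of_Ici fun r => ?_
  simp only [Set.preimage, Set.mem_Ici, le_stepDownIndex_iff]
  exact (measurable_const.and <| .forall fun i => .forall fun _ =>
    measurableSet_setOfPred.1 (hC i)).setOf

end StepDown

section BHStepDown

variable {m : ℕ} {b : ℕ → ℝ} {q q' : Fin m → ℝ}

theorem measurable_sdR (b : ℕ → ℝ) : Measurable fun q : Fin m → ℝ => sdR b q :=
  measurable_stepDownIndex fun i => measurableSet_le (measurable_orderStat i) measurable_const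

theorem measurable_sdRdata (b : ℕ → ℝ) : Measurable fun q : Fin m → ℝ => sdRdata b q :=
  measurable_stepDownIndex fun i => measurableSet_le (measurable_orderStat i)
    (measurable_from_nat.comp (measurable_countLE (measurable_orderStat i)))

theorem orderStat_sdR_le (h1 : 1 ≤ sdR b q) : orderStat q (sdR b q) ≤ b (sdR b q) :=
  stepDownIndex_spec h1 le_rfl

theorem le_of_forall_ne_eq {i : Fin m}
    (hqq' : ∀ k ≠ i, q k = q' k) (hle : q i ≤ q' i) : q ≤ q' :=
  fun k => if hk : k = i then hk ▸ hle else (hqq' k hk).le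

theorem sdR_antitone (h : q ≤ q') : sdR b q' ≤ sdR b q := by
  refine le_stepDownIndex_iff.2 ⟨stepDownIndex_le, fun i hi => ?_⟩
  obtain ⟨h1, h2⟩ := mem_Icc.1 hi
  exact (orderStat_le_orderStat_of_le h h1 (h2.trans stepDownIndex_le)).trans
    (stepDownIndex_spec h1 h2)

theorem sdRdata_le_card_lt {k : Fin m} (hk : b (countLE q (q k)) < q k) :
    sdRdata b q ≤ #{l | q l < q k} := by
  by_contra! h
  have hC := stepDownIndex_spec (C := fun i => orderStat q i ≤ b (countLE q (orderStat q i)))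
    (Nat.le_add_left 1 _) h
  rw [orderStat_card_lt_add_one] at hC
  exact hk.not_ge hC

theorem countLE_orderStat_sdRdata (h1 : 1 ≤ sdRdata b q) :
    countLE q (orderStat q (sdRdata b q)) = sdRdata b q := by
  set R := sdRdata b q
  have hRm : R ≤ m := stepDownIndex_le
  have hge : R ≤ countLE q (orderStat q R) := (isLeast_orderStat h1 hRm).1
  refine le_antisymm (not_lt.1 fun hlt => ?_) hge
  have hRlt : R < m := hlt.trans_le (countLE_le _ _)
  -- `p_{R+1:m}` ties with `p_{R:m}`, so it passes exactly when `p_{R:m}` does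
  have htie : orderStat q (R + 1) = orderStat q R :=
    le_antisymm ((orderStat_le_iff (by omega) hRlt).2 hlt) (orderStat_mono h1 (by omega) hRlt)
  refine not_stepDownIndex_add_one hRlt ?_
  show orderStat q (R + 1) ≤ b (countLE q (orderStat q (R + 1)))
  rw [htie]
  exact stepDownIndex_spec h1 le_rfl

theorem orderStat_sdRdata_le (h1 : 1 ≤ sdRdata b q) :
    orderStat q (sdRdata b q) ≤ b (sdRdata b q) := by
  have hC := stepDownIndex_spec (C := fun i => orderStat q i ≤ b (countLE q (orderStat q i)))
    h1 le_rfl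
  rwa [countLE_orderStat_sdRdata h1] at hC

theorem sdRdata_antitone_of_update (hb : Monotone b) {i : Fin m}
    (hqq' : ∀ k ≠ i, q k = q' k) (hle : q i ≤ q' i) (hself : q i ≤ b (sdRdata b q)) :
    sdRdata b q' ≤ sdRdata b q := by
  set R := sdRdata b q
  by_contra! hlt
  have hRm : R < m := hlt.trans_le stepDownIndex_le
  set t := orderStat q (R + 1)
  have hbad : b (countLE q t) < t := not_le.1 (not_stepDownIndex_add_one hRm)
  have hcount : R + 1 ≤ countLE q t := (isLeast_orderStat (by omega) hRm).1
  obtain ⟨k, hk⟩ := exists_eq_orderStat (q := q) (by omega : 1 ≤ R + 1) hRm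
  -- `t` fails for `q`, so it is not `q i`, which passes; hence `t` is also a value of `q'`,
  -- fails for `q'` as well, and stops the test on `q'` by index `R`
  have hki : k ≠ i := by
    rintro rfl
    exact hbad.not_ge ((hk ▸ hself).trans (hb (by omega)))
  have hqq : q ≤ q' := le_of_forall_ne_eq hqq' hle
  have hbad' : b (countLE q' (q' k)) < q' k := by
    rw [← hqq' k hki, hk]
    exact (hb (countLE_anti_of_le hqq t)).trans_lt hbad
  have hR' := sdRdata_le_card_lt hbad'
  have hcard : #{l | q' l < q' k} ≤ #{l | q l < t} := by
    rw [← hqq' k hki, hk]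
    exact card_le_card (monotone_filter_right _ fun l _ hl => (hqq l).trans_lt hl)
  have hlt' : #{l | q l < t} < R + 1 := card_lt_orderStat_lt (by omega) hRm
  omega

end BHStepDown

theorem ProbabilityTheory.IndepFun.prodMk_right_of_prodMk_left {Ω α β γ : Type*}
    [MeasurableSpace Ω] [MeasurableSpace α] [MeasurableSpace β] [MeasurableSpace γ]
    {μ : Measure Ω} [IsFiniteMeasure μ] {X : Ω → α} {Y : Ω → β} {W : Ω → γ}
    (hX : Measurable X) (hY : Measurable Y) (hW : Measurable W)
    (hXY : IndepFun X Y μ) (h : IndepFun (fun ω => (X ω, Y ω)) W μ) :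
    IndepFun X (fun ω => (Y ω, W ω)) μ := by
  have hYW : IndepFun Y W μ := h.comp measurable_snd measurable_id
  rw [indepFun_iff_map_prod_eq_prod_map_map hX.aemeasurable (hY.prodMk hW).aemeasurable,
    (indepFun_iff_map_prod_eq_prod_map_map hY.aemeasurable hW.aemeasurable).1 hYW,
    ← Measure.prodAssoc_prod,
    ← (indepFun_iff_map_prod_eq_prod_map_map hX.aemeasurable hY.aemeasurable).1 hXY,
    ← (indepFun_iff_map_prod_eq_prod_map_map (hX.prodMk hY).aemeasurable hW.aemeasurable).1 h,
    Measure.map_map MeasurableEquiv.prodAssoc.measurable ((hX.prodMk hY).prodMk hW)]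
  rfl

theorem ProbabilityTheory.IndepFun.integral_comp_le {Ω α β : Type*}
    [MeasurableSpace Ω] [MeasurableSpace α] [MeasurableSpace β]
    {μ : Measure Ω} [IsProbabilityMeasure μ] {Z : Ω → β} {X : Ω → α}
    (hZ : Measurable Z) (hX : Measurable X) (hZX : IndepFun Z X μ) {F : β × α → ℝ}
    (hF : Integrable F ((μ.map Z).prod (μ.map X))) {c : ℝ}
    (hc : ∀ z, ∫ x, F (z, x) ∂(μ.map X) ≤ c) :
    ∫ ω, F (Z ω, X ω) ∂μ ≤ c := by
  have hmap := (indepFun_iff_map_prod_eq_prod_map_map hZ.aemeasurable hX.aemeasurable).1 hZX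
  have := Measure.isProbabilityMeasure_map (μ := μ) hZ.aemeasurable
  calc ∫ ω, F (Z ω, X ω) ∂μ = ∫ y, F y ∂(μ.map fun ω => (Z ω, X ω)) := by
        rw [integral_map (hZ.prodMk hX).aemeasurable (hmap ▸ hF.aestronglyMeasurable)]
    _ = ∫ z, ∫ x, F (z, x) ∂(μ.map X) ∂(μ.map Z) := by rw [hmap, integral_prod F hF]
    _ ≤ ∫ _, c ∂(μ.map Z) := integral_mono hF.integral_prod_left (integrable_const c) hc
    _ = c := by simp

theorem measureReal_Iic_le {ν : Measure ℝ} [IsProbabilityMeasure ν]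
    (hν : ∀ x ∈ Set.Icc (0 : ℝ) 1, ν (Set.Iic x) ≤ ENNReal.ofReal x) {x : ℝ} (hx : 0 ≤ x) :
    ν.real (Set.Iic x) ≤ x := by
  rcases le_total x 1 with h1 | h1
  · exact ENNReal.toReal_le_of_le_ofReal hx (hν x ⟨hx, h1⟩)
  · exact measureReal_le_one.trans h1

theorem integral_indicator_inv_le {ν : Measure ℝ} [IsProbabilityMeasure ν]
    (hν : ∀ x ∈ Set.Icc (0 : ℝ) 1, ν (Set.Iic x) ≤ ENNReal.ofReal x) {c : ℝ} (hc : 0 ≤ c)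
    {g : ℝ → ℕ} {E : Set ℝ} (hE : ∀ u ∈ E, ∀ u' ∈ E, u' ≤ c * g u) :
    ∫ u, E.indicator (fun u => ((max (g u) 1 : ℕ) : ℝ)⁻¹) u ∂ν ≤ c := by
  rcases E.eq_empty_or_nonempty with rfl | hE0
  · simpa using hc
  obtain ⟨_, ⟨u₀, hu₀, rfl⟩, hmin⟩ := wellFounded_lt.has_min (g '' E) (hE0.image g)
  set k : ℕ := max (g u₀) 1
  have hk : (0 : ℝ) < k := by positivity
  have hbound : ∀ u, E.indicator (fun u => ((max (g u) 1 : ℕ) : ℝ)⁻¹) u ≤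
      (Set.Iic (c * k)).indicator (fun _ => (k : ℝ)⁻¹) u := by
    intro u
    by_cases hu : u ∈ E
    · have hgu : k ≤ max (g u) 1 := max_le_max_right 1 (not_lt.1 (hmin _ ⟨u, hu, rfl⟩))
      have huk : u ∈ Set.Iic (c * k) := (hE u₀ hu₀ u hu).trans
        (mul_le_mul_of_nonneg_left (by exact_mod_cast le_max_left _ _) hc)
      rw [Set.indicator_of_mem hu, Set.indicator_of_mem huk]
      exact inv_anti₀ hk (by exact_mod_cast hgu)
    · rw [Set.indicator_of_notMem hu]
      exact Set.indicator_nonneg (fun _ _ => inv_nonneg.2 hk.le) u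
  calc ∫ u, E.indicator (fun u => ((max (g u) 1 : ℕ) : ℝ)⁻¹) u ∂ν
      ≤ ∫ u, (Set.Iic (c * k)).indicator (fun _ => (k : ℝ)⁻¹) u ∂ν :=
        integral_mono_of_nonneg (ae_of_all _ (Set.indicator_nonneg fun _ _ => by positivity))
          ((integrable_const _).indicator measurableSet_Iic) (ae_of_all _ hbound)
    _ = ν.real (Set.Iic (c * k)) * (k : ℝ)⁻¹ := by
        rw [integral_indicator_const _ measurableSet_Iic, smul_eq_mul]
    _ ≤ c * k * (k : ℝ)⁻¹ := by gcongr; exact measureReal_Iic_le hν (by positivity)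
    _ = c := by field_simp

section FDR

variable {m : ℕ}

def rejectionShare (R : (Fin m → ℝ) → ℕ) (rej : (Fin m → ℝ) → Fin m → Prop) (i : Fin m) :
    (Fin m → ℝ) → ℝ :=
  {q | rej q i}.indicator fun q => ((max (R q) 1 : ℕ) : ℝ)⁻¹

variable {R : (Fin m → ℝ) → ℕ} {rej : (Fin m → ℝ) → Fin m → Prop} {i : Fin m}

theorem measurable_rejectionShare (hR : Measurable R) (hrej : MeasurableSet {q | rej q i}) :
    Measurable (rejectionShare R rej i) :=
  ((measurable_from_nat (f := fun r : ℕ => ((max r 1 : ℕ) : ℝ)⁻¹)).comp hR).indicator hrej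

theorem integrable_rejectionShare_comp {X : Type*} [MeasurableSpace X] {ν : Measure X}
    [IsFiniteMeasure ν] (hR : Measurable R) (hrej : MeasurableSet {q | rej q i})
    {f : X → Fin m → ℝ} (hf : Measurable f) :
    Integrable (fun x => rejectionShare R rej i (f x)) ν := by
  refine .of_bound ((measurable_rejectionShare hR hrej).comp hf).aestronglyMeasurable 1
    (ae_of_all _ fun x => ?_)
  have h1 : (1 : ℝ) ≤ ((max (R (f x)) 1 : ℕ) : ℝ) := by exact_mod_cast le_max_right _ _
  rw [Real.norm_eq_abs, abs_le]
  constructor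
  · exact (neg_nonpos.2 zero_le_one).trans (Set.indicator_nonneg (fun _ _ => by positivity) _)
  · exact Set.indicator_le' (fun _ _ => inv_le_one_of_one_le₀ h1) (fun _ _ => zero_le_one) _

theorem FDR_eq_sum_integral_rejectionShare {Ω : Type*} [MeasurableSpace Ω] {μ : Measure Ω}
    [IsFiniteMeasure μ] {p : Ω → Fin m → ℝ} (hp : Measurable p) (I0 : Finset (Fin m))
    (hR : Measurable R) (hrej : ∀ i, MeasurableSet {q | rej q i}) :
    FDR μ p I0 R rej = ∑ i ∈ I0, ∫ ω, rejectionShare R rej i (p ω) ∂μ := by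
  rw [FDR, ← integral_finsetSum I0 fun i _ => integrable_rejectionShare_comp hR (hrej i) hp]
  congr 1
  funext ω
  simp only [card_filter, Nat.cast_sum, sum_div, rejectionShare, Set.indicator_apply]
  exact sum_congr rfl fun i _ => by by_cases h : rej (p ω) i <;> simp [h]

theorem integral_rejectionShare_le {Ω : Type*} [MeasurableSpace Ω] {μ : Measure Ω}
    [IsProbabilityMeasure μ] {p : Ω → Fin m → ℝ} (hp : Measurable p)
    (hindep : IndepFun (fun ω => p ω i) (fun ω => Function.update (p ω) i 0) μ)
    (hstoch : ∀ x ∈ Set.Icc (0 : ℝ) 1, μ {ω | p ω i ≤ x} ≤ ENNReal.ofReal x)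
    (hR : Measurable R) (hrej : MeasurableSet {q | rej q i}) {c : ℝ} (hc : 0 ≤ c)
    (hfiber : ∀ q q', (∀ k ≠ i, q k = q' k) → rej q i → rej q' i → q' i ≤ c * R q) :
    ∫ ω, rejectionShare R rej i (p ω) ∂μ ≤ c := by
  have hX : Measurable fun ω => p ω i := (measurable_pi_apply i).comp hp
  have hZ : Measurable fun ω => Function.update (p ω) i 0 :=
    measurable_update'.comp (hp.prodMk measurable_const)
  have hupd : Measurable fun x : (Fin m → ℝ) × ℝ => Function.update x.1 i x.2 := measurable_update'
  suffices hfib : ∀ z, ∫ u, rejectionShare R rej i (Function.update z i u)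
      ∂(μ.map fun ω => p ω i) ≤ c by
    simpa only [Function.update_idem, Function.update_eq_self] using
      hindep.symm.integral_comp_le hZ hX (integrable_rejectionShare_comp hR hrej hupd) hfib
  intro z
  have hν : ∀ x ∈ Set.Icc (0 : ℝ) 1, μ.map (fun ω => p ω i) (Set.Iic x) ≤ ENNReal.ofReal x :=
    fun x hx => (Measure.map_apply hX measurableSet_Iic).trans_le (hstoch x hx)
  have := Measure.isProbabilityMeasure_map (μ := μ) hX.aemeasurable
  refine integral_indicator_inv_le hν hc fun u hu u' hu' => ?_
  have h := hfiber _ _ (fun k hk => by simp [Function.update_of_ne hk]) hu hu'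
  rwa [Function.update_self] at h

end FDR

theorem indepFun_eval_update_of_basicIndep {Ω : Type*} [MeasurableSpace Ω] {μ : Measure Ω}
    [IsFiniteMeasure μ] {m : ℕ} {I0 : Finset (Fin m)} {p : Ω → Fin m → ℝ}
    (hmeas : ∀ i, Measurable (fun ω => p ω i))
    (hBI2 : IndepFun (fun ω (i : {i // i ∈ I0}) => p ω i)
      (fun ω (i : {i // i ∉ I0}) => p ω i) μ)
    (hBI3 : iIndepFun (fun (i : {i // i ∈ I0}) ω => p ω i.1) μ) {i : Fin m} (hi : i ∈ I0) :
    IndepFun (fun ω => p ω i) (fun ω => Function.update (p ω) i 0) μ := by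
  set i' : {j // j ∈ I0} := ⟨i, hi⟩
  let Y : Ω → {x // x ∈ univ.erase i'} → ℝ := fun ω x => p ω x.1.1
  let W : Ω → {j // j ∉ I0} → ℝ := fun ω j => p ω j
  have hY : Measurable Y := measurable_pi_lambda _ fun x => hmeas x.1.1
  have hW : Measurable W := measurable_pi_lambda _ fun j => hmeas j
  have hXY : IndepFun (fun ω => p ω i) Y μ :=
    (hBI3.indepFun_finset {i'} (univ.erase i')
      (disjoint_singleton_left.2 (notMem_erase i' univ)) fun j => hmeas j).comp
      (measurable_pi_apply (⟨i', mem_singleton_self i'⟩ : {x // x ∈ ({i'} : Finset _)}))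
      measurable_id
  have hXYW : IndepFun (fun ω => (p ω i, Y ω)) W μ :=
    hBI2.comp ((measurable_pi_apply i').prodMk
      (measurable_pi_lambda _ fun x : {x // x ∈ univ.erase i'} => measurable_pi_apply x.1))
      measurable_id
  let glue : ({x // x ∈ univ.erase i'} → ℝ) × ({j // j ∉ I0} → ℝ) → Fin m → ℝ :=
    fun yw k => if hk : k = i then 0 else if hk' : k ∈ I0 then
      yw.1 ⟨⟨k, hk'⟩, mem_erase.2 ⟨fun h => hk (congrArg Subtype.val h), mem_univ _⟩⟩
    else yw.2 ⟨k, hk'⟩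
  have hglue : Measurable glue := measurable_pi_lambda _ fun k => by
    by_cases hk : k = i
    · simp only [glue, hk, dite_true]; exact measurable_const
    by_cases hk' : k ∈ I0
    · simp only [glue, hk, hk', dite_true, dite_false]
      exact (measurable_pi_apply _).comp measurable_fst
    · simp only [glue, hk, hk', dite_false]
      exact (measurable_pi_apply _).comp measurable_snd
  have hupdate : (fun ω => Function.update (p ω) i 0) = glue ∘ fun ω => (Y ω, W ω) := by
    funext ω k
    by_cases hk : k = i
    · subst hk; simp [glue]
    · by_cases hk' : k ∈ I0 <;> simp [glue, hk, hk', Y, W]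
  rw [hupdate]
  exact (hXY.prodMk_right_of_prodMk_left (hmeas i) hY hW hXYW).comp measurable_id hglue

section FDRControl

variable {Ω : Type*} [MeasurableSpace Ω] {μ : Measure Ω} [IsProbabilityMeasure μ] {m : ℕ}
  {I0 : Finset (Fin m)} {p : Ω → Fin m → ℝ} {R : (Fin m → ℝ) → ℕ}

theorem FDR_le_of_fiber (hmeas : ∀ i, Measurable (fun ω => p ω i))
    (hindep : ∀ i ∈ I0, IndepFun (fun ω => p ω i) (fun ω => Function.update (p ω) i 0) μ)
    (hstoch : ∀ i ∈ I0, ∀ x ∈ Set.Icc (0:ℝ) 1, μ {ω | p ω i ≤ x} ≤ ENNReal.ofReal x)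
    {rej : (Fin m → ℝ) → Fin m → Prop} (hR : Measurable R)
    (hrej : ∀ i, MeasurableSet {q | rej q i}) {c : ℝ} (hc : 0 ≤ c)
    (hfiber : ∀ i q q', (∀ k ≠ i, q k = q' k) → rej q i → rej q' i → q' i ≤ c * R q) :
    FDR μ p I0 R rej ≤ I0.card * c := by
  have hp : Measurable p := measurable_pi_lambda _ hmeas
  rw [FDR_eq_sum_integral_rejectionShare hp I0 hR hrej, ← nsmul_eq_mul, ← sum_const]
  exact sum_le_sum fun i hi =>
    integral_rejectionShare_le hp (hindep i hi) (hstoch i hi) hR (hrej i) hc (hfiber i)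

theorem measurableSet_stepDown_rej (hR : Measurable R) (i : Fin m) :
    MeasurableSet {q : Fin m → ℝ | 1 ≤ R q ∧ q i ≤ orderStat q (R q)} := by
  have hos : Measurable fun q : Fin m → ℝ => orderStat q (R q) :=
    (measurable_from_prod_countable_left (f := fun x : (Fin m → ℝ) × ℕ => orderStat x.1 x.2)
      measurable_orderStat).comp (measurable_id.prodMk hR)
  exact (measurableSet_le measurable_const hR).inter
    (measurableSet_le (measurable_pi_apply i) hos)

theorem FDR_stepDown_le {b : ℕ → ℝ} {c : ℝ} (hc : 0 ≤ c) (hb : ∀ r, b r = c * r)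
    (hmeas : ∀ i, Measurable (fun ω => p ω i))
    (hindep : ∀ i ∈ I0, IndepFun (fun ω => p ω i) (fun ω => Function.update (p ω) i 0) μ)
    (hstoch : ∀ i ∈ I0, ∀ x ∈ Set.Icc (0:ℝ) 1, μ {ω | p ω i ≤ x} ≤ ENNReal.ofReal x)
    (hR : Measurable R) (hsc : ∀ q, 1 ≤ R q → orderStat q (R q) ≤ b (R q))
    (hmono : ∀ q q' i, (∀ k ≠ i, q k = q' k) → q i ≤ q' i → q i ≤ b (R q) → R q' ≤ R q) :
    FDR μ p I0 R (fun q i => 1 ≤ R q ∧ q i ≤ orderStat q (R q)) ≤ I0.card * c := by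
  refine FDR_le_of_fiber hmeas hindep hstoch hR (measurableSet_stepDown_rej hR) hc
    fun i q q' hqq' ⟨h1, hq⟩ ⟨h1', hq'⟩ => ?_
  have hself : q i ≤ b (R q) := hq.trans (hsc q h1)
  rw [← hb]
  rcases le_total (q' i) (q i) with hle | hle
  · exact hle.trans hself
  · have hRR : R q' ≤ R q := hmono q q' i hqq' hle hself
    calc q' i ≤ b (R q') := hq'.trans (hsc q' h1')
      _ ≤ b (R q) := by rw [hb, hb]; gcongr

end FDRControl

theorem bh_stepdown_fdr_control_general
    {Ω : Type*} [MeasurableSpace Ω] (μ : Measure Ω) [IsProbabilityMeasure μ]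
    (m : ℕ) (α : ℝ) (hα : α ∈ Set.Ioo (0:ℝ) 1)
    (I0 : Finset (Fin m)) (p : Ω → Fin m → ℝ)
    (hmeas : ∀ i, Measurable (fun ω => p ω i))
    -- (BI)(2)
    (hBI2 : IndepFun (fun ω (i : {i // i ∈ I0}) => p ω i)
      (fun ω (i : {i // i ∉ I0}) => p ω i) μ)
    -- (BI)(3)
    (hBI3 : iIndepFun (fun (i : {i // i ∈ I0}) ω => p ω i.1) μ)
    (hstoch : ∀ i ∈ I0, ∀ x ∈ Set.Icc (0:ℝ) 1, μ {ω | p ω i ≤ x} ≤ ENNReal.ofReal x) :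
    sdFDR μ (bh m α) p I0 ≤ (I0.card : ℝ) / m * α ∧
    sdFDRdata μ (bh m α) p I0 ≤ (I0.card : ℝ) / m * α := by
  have hc : 0 ≤ α / m := div_nonneg hα.1.le m.cast_nonneg
  have hb : ∀ r : ℕ, bh m α r = α / m * r := fun r => by rw [bh]; ring
  have hbmono : Monotone (bh m α) := fun r s hrs => by rw [hb, hb]; gcongr
  have hlevel : (I0.card : ℝ) * (α / m) = I0.card / m * α := by ring
  have hindep := fun i (hi : i ∈ I0) => indepFun_eval_update_of_basicIndep hmeas hBI2 hBI3 hi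
  constructor
  · exact (FDR_stepDown_le hc hb hmeas hindep hstoch (measurable_sdR _)
      (fun _ h1 => orderStat_sdR_le h1)
      fun _ _ _ hqq' hle _ => sdR_antitone (le_of_forall_ne_eq hqq' hle)).trans_eq hlevel
  · exact (FDR_stepDown_le hc hb hmeas hindep hstoch (measurable_sdRdata _)
      (fun _ h1 => orderStat_sdRdata_le h1)
      fun _ _ _ hqq' hle hself => sdRdata_antitone_of_update hbmono hqq' hle hself).trans_eq
        hlevel

/-- The Benjamini–Hochberg step-down test (with critical values
`b_i = iα/m`, or with the data-dependent values `a_i = b_{m·F̂_m(p_{i:m})}`)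
controls the FDR at level `(m₀/m)·α` under the basic independence assumptions. -/
theorem bh_stepdown_fdr_control
    {Ω : Type*} [MeasurableSpace Ω] (μ : Measure Ω) [IsProbabilityMeasure μ]
    (m : ℕ) (hm : 1 ≤ m) (α : ℝ) (hα : α ∈ Set.Ioo (0:ℝ) 1)
    (I0 : Finset (Fin m)) (p : Ω → Fin m → ℝ)
    (hmeas : ∀ i, Measurable (fun ω => p ω i))
    (hrange : ∀ ω i, p ω i ∈ Set.Icc (0:ℝ) 1)
    -- (BI)(2)
    (hBI2 : IndepFun (fun ω (i : {i // i ∈ I0}) => p ω i)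
      (fun ω (i : {i // i ∉ I0}) => p ω i) μ)
    -- (BI)(3)
    (hBI3 : iIndepFun (fun (i : {i // i ∈ I0}) ω => p ω i.1) μ)
    (hstoch : ∀ i ∈ I0, ∀ x ∈ Set.Icc (0:ℝ) 1, μ {ω | p ω i ≤ x} ≤ ENNReal.ofReal x) :
    sdFDR μ (bh m α) p I0 ≤ (I0.card : ℝ) / m * α ∧
    sdFDRdata μ (bh m α) p I0 ≤ (I0.card : ℝ) / m * α :=
  bh_stepdown_fdr_control_general μ m α hα I0 p hmeas hBI2 hBI3 hstoch
end
end
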